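/- For a bimodule map α ∈ Hom_{A^e}(P_1, A), write α = (a₁, a₂) when α(1⊗x⊗1) = a₁ and α(1⊗y⊗1) = a₂, and set Δ(α) = Σ_{b∈B∖{1}} ⟨α(C(b)), 1⟩·b* ∈ A. Then: Δ((xyxy, xyx)) = Δ((xyxy, 0)) = yxy; Δ((xyx, 0)) = xy+yx; Δ((yxy, xyxy)) = Δ((0, xyxy)) = xyx. (These five cocycles represent the Hochschild classes p₁u₁ = p₂u₁', p₃u₁, p₂u₁ = p₂'u₁', p₂'u₁ = p₁u₁', p₃u₁' respectively, so Δ(p₁u₁) = Δ(p₃u₁) = Δ(p₂u₁') = p₂', Δ(p₂u₁) = Δ(p₂'u₁') = p₁, and Δ(p₂'u₁) = Δ(p₁u₁') = Δ(p₃u₁') = p₂, where p₁ = xy+yx, p₂ = xyx, p₂' = yxy.) -/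

import Mathlib

open scoped TensorProduct
open MulOpposite

noncomputable section

namespace QP

variable (k : Type*) [Field k]

/-- The generator `x` of the free algebra `k⟨x,y⟩`. -/
def Xg : FreeAlgebra k (Fin 2) := FreeAlgebra.ι k 0
/-- The generator `y` of the free algebra `k⟨x,y⟩`. -/
def Yg : FreeAlgebra k (Fin 2) := FreeAlgebra.ι k 1

/-- The relations `x²+yxy, y²+xyx, x⁴, y⁴` defining `kQ₈` in characteristic 2. -/
inductive QRel : FreeAlgebra k (Fin 2) → FreeAlgebra k (Fin 2) → Prop
  | rx : QRel (Xg k * Xg k + Yg k * Xg k * Yg k) 0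
  | ry : QRel (Yg k * Yg k + Xg k * Yg k * Xg k) 0
  | x4 : QRel (Xg k ^ 4) 0
  | y4 : QRel (Yg k ^ 4) 0

/-- `A = k⟨x,y⟩/(x²+yxy, y²+xyx, x⁴, y⁴)`. -/
abbrev A := RingQuot (QRel k)

/-- The image of `x` in `A`. -/
def x : A k := RingQuot.mkAlgHom k (QRel k) (Xg k)
/-- The image of `y` in `A`. -/
def y : A k := RingQuot.mkAlgHom k (QRel k) (Yg k)

/-- The monomial basis `1, x, y, xy, yx, xyx, yxy, xyxy` of `A`. -/
def mon : Fin 8 → A k :=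
  ![1, x k, y k, x k * y k, y k * x k, x k * y k * x k, y k * x k * y k,
    x k * y k * x k * y k]

/-- The dual family `1* = xyxy, x* = yxy, y* = xyx, (xy)* = xy, (yx)* = yx,
`(xyx)* = y, (yxy)* = x, (xyxy)* = 1`. -/
def dm : Fin 8 → A k :=
  ![mon k 7, mon k 6, mon k 5, mon k 3, mon k 4, mon k 2, mon k 1, mon k 0]

/-- `P₀ = P₃ = P₄ = A ⊗ A`. -/
abbrev AA := A k ⊗[k] A k
/-- `P₁ ≅ (A⊗A)² ≅ A ⊗ kQ₁ ⊗ A` (components: `x`-slot, `y`-slot); likewise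
`P₂ ≅ (A⊗A)² ≅ A ⊗ kQ₁* ⊗ A` (components: `r_x`-slot, `r_y`-slot). -/
abbrev PP := AA k × AA k

/-- Multiplication `A ⊗ A → A`. -/
def mulm : AA k →ₗ[k] A k := LinearMap.mul' k (A k)

/-- `two p q : a⊗b ↦ (a*p)⊗(q*b)`: the bimodule map `A⊗A → A⊗A` determined by
`1⊗1 ↦ p⊗q`. -/
def two (p q : A k) : AA k →ₗ[k] AA k :=
  TensorProduct.map (LinearMap.mulRight k p) (LinearMap.mulLeft k q)

/-- `el p q : a ↦ p⊗(q*a)`: the right `A`-module map `A → A⊗A` determined by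
`1 ↦ p⊗q`. -/
def el (p q : A k) : A k →ₗ[k] AA k :=
  (TensorProduct.mk k (A k) (A k) p).comp (LinearMap.mulLeft k q)

/-- Left multiplication by `a` on `A⊗A`. -/
def lm (a : A k) : AA k →ₗ[k] AA k := LinearMap.rTensor (A k) (LinearMap.mulLeft k a)
/-- Right multiplication by `a` on `A⊗A`. -/
def rm (a : A k) : AA k →ₗ[k] AA k := LinearMap.lTensor (A k) (LinearMap.mulRight k a)
/-- Left multiplication by `a` on `P₁` (or `P₂`). -/
def lmp (a : A k) : PP k →ₗ[k] PP k := (lm k a).prodMap (lm k a)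

/-- The bimodule map `A⊗A → A` determined by `1⊗1 ↦ c`, i.e. `a⊗b ↦ a*c*b`. -/
def bimap (c : A k) : AA k →ₗ[k] A k := (mulm k).comp (two k c 1)

/-- The bimodule map `P₁ → A` (or `P₂ → A`) with values `(c₁, c₂)` on the two
free generators. -/
def pairc (c1 c2 : A k) : PP k →ₗ[k] A k := (bimap k c1).coprod (bimap k c2)

/-- `d₀ : A⊗A → A` is the multiplication. -/
def d0 : AA k →ₗ[k] A k := mulm k

/-- `d₁ : P₁ → P₀`, `1⊗x⊗1 ↦ x⊗1+1⊗x`, `1⊗y⊗1 ↦ y⊗1+1⊗y`. -/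
def d1 : PP k →ₗ[k] AA k :=
  (two k (x k) 1 + two k 1 (x k)).coprod (two k (y k) 1 + two k 1 (y k))

/-- `d₂ : P₂ → P₁`, `1⊗r_x⊗1 ↦ 1⊗x⊗x + x⊗x⊗1 + 1⊗y⊗xy + y⊗x⊗y + yx⊗y⊗1` and
`1⊗r_y⊗1 ↦ 1⊗y⊗y + y⊗y⊗1 + 1⊗x⊗yx + x⊗y⊗x + xy⊗x⊗1`. -/
def d2 : PP k →ₗ[k] PP k :=
  ((two k 1 (x k) + two k (x k) 1 + two k (y k) (y k)).prod
      (two k 1 (x k * y k) + two k (y k * x k) 1)).coprod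
    ((two k 1 (y k * x k) + two k (x k * y k) 1).prod
      (two k 1 (y k) + two k (y k) 1 + two k (x k) (x k)))

/-- `d₃ : P₃ → P₂`, `1⊗1 ↦ x⊗r_x⊗1 + 1⊗r_x⊗x + y⊗r_y⊗1 + 1⊗r_y⊗y`. -/
def d3 : AA k →ₗ[k] PP k :=
  (two k (x k) 1 + two k 1 (x k)).prod (two k (y k) 1 + two k 1 (y k))

/-- `ρ : A → A⊗A`, `1 ↦ Σ_{b∈B} b*⊗b`. -/
def rho : A k →ₗ[k] AA k :=
  ∑ i : Fin 8,
    (((TensorProduct.mk k (A k) (A k)).flip (mon k i)).comp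
      (LinearMap.mulRight k (dm k i)))

/-- `d₄ = ρ ∘ d₀ : P₄ → P₃`. -/
def d4 : AA k →ₗ[k] AA k := (rho k).comp (d0 k)

variable {k}

/-- The right `A`-module map `A⊗A → V` sending `b⊗a ↦ g_b(a)` for `b` running
through the monomial basis `bb`. -/
def rext {V : Type*} [AddCommGroup V] [Module k V] (bb : Module.Basis (Fin 8) k (A k))
    (g : Fin 8 → (A k →ₗ[k] V)) : AA k →ₗ[k] V :=
  TensorProduct.lift (bb.constr k g)

variable (k)

/-- `t₋₁ : A → A⊗A`, `a ↦ 1⊗a`. -/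
def tneg : A k →ₗ[k] AA k := TensorProduct.mk k (A k) (A k) 1

/-- `C(b) ∈ P₁` for `b` in the monomial basis: the bimodule derivation applied
to the basis monomials. -/
def Cm : Fin 8 → PP k :=
  ![0,
    (1 ⊗ₜ 1, 0),
    (0, 1 ⊗ₜ 1),
    (1 ⊗ₜ y k, x k ⊗ₜ 1),
    (y k ⊗ₜ 1, 1 ⊗ₜ x k),
    (1 ⊗ₜ (y k * x k) + (x k * y k) ⊗ₜ 1, x k ⊗ₜ x k),
    (y k ⊗ₜ y k, 1 ⊗ₜ (x k * y k) + (y k * x k) ⊗ₜ 1),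
    (1 ⊗ₜ (y k * x k * y k) + (x k * y k) ⊗ₜ y k,
      x k ⊗ₜ (x k * y k) + (x k * y k * x k) ⊗ₜ 1)]

variable {k}

/-- `t₀ : P₀ → P₁`, `b⊗1 ↦ C(b)`, a right `A`-module map. -/
def t0 (bb : Module.Basis (Fin 8) k (A k)) : AA k →ₗ[k] PP k :=
  rext (V := PP k) bb
    ![0,
      (el k 1 1).prod 0,
      LinearMap.prod 0 (el k 1 1),
      (el k 1 (y k)).prod (el k (x k) 1),
      (el k (y k) 1).prod (el k 1 (x k)),
      (el k 1 (y k * x k) + el k (x k * y k) 1).prod (el k (x k) (x k)),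
      (el k (y k) (y k)).prod (el k 1 (x k * y k) + el k (y k * x k) 1),
      (el k 1 (y k * x k * y k) + el k (x k * y k) (y k)).prod
        (el k (x k) (x k * y k) + el k (x k * y k * x k) 1)]

/-- `t₁ : P₁ → P₂`, the right `A`-module map from the table in the paper. -/
def t1 (bb : Module.Basis (Fin 8) k (A k)) : PP k →ₗ[k] PP k :=
  (rext (V := PP k) bb
    ![0,
      (el k 1 1).prod 0,
      0,
      0,
      (el k (y k) 1 + el k (x k * y k) (y k)).prod (el k 1 (x k * y k)),
      (el k (x k * y k) 1).prod (el k (x k) (x k * y k)),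
      LinearMap.prod 0 (el k 1 (y k) + el k (y k) 1),
      (el k 1 (y k * x k * y k) + el k (x k) (x k) + el k (y k * x k * y k) 1).prod
        (el k (y k * x k) (x k * y k))]).coprod
  (rext (V := PP k) bb
    ![0,
      0,
      LinearMap.prod 0 (el k 1 1),
      (el k 1 (y k * x k)).prod (el k (x k) 1 + el k (y k * x k) (x k)),
      0,
      0,
      (el k (y k) (y k * x k)).prod (el k (y k * x k) 1),
      (el k (x k * y k) (y k * x k)).prod (el k (x k * y k * x k) 1)])

/-- `t₂ : P₂ → P₃`, the right `A`-module map from the table in the paper. -/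
def t2 (bb : Module.Basis (Fin 8) k (A k)) : PP k →ₗ[k] AA k :=
  (rext (V := AA k) bb
    ![0,
      el k 1 1,
      0,
      0,
      el k (y k) 1,
      el k (x k * y k) 1 + el k (x k) (y k),
      el k 1 (x k),
      el k 1 (y k * x k * y k) + el k (y k * x k * y k) 1 + el k (y k) (x k * y k)
        + el k (y k * x k) (y k)]).coprod
  (rext (V := AA k) bb
    ![0,
      0,
      0,
      el k (x k) 1,
      0,
      0,
      el k (y k) (x k) + el k (y k * x k) 1,
      el k (x k) (y k * x k) + el k (x k * y k) (x k) + el k (x k * y k * x k) 1])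

/-- `τ : P₃ → A`, `xyxy⊗1 ↦ 1`, `b⊗1 ↦ 0` for the other basis monomials. -/
def tau (bb : Module.Basis (Fin 8) k (A k)) : AA k →ₗ[k] A k :=
  rext bb ![0, 0, 0, 0, 0, 0, 0, LinearMap.id]

/-- `t₃ = t₋₁ ∘ τ : P₃ → P₄`. -/
def t3 (bb : Module.Basis (Fin 8) k (A k)) : AA k →ₗ[k] AA k := (tneg k).comp (tau bb)

/-- `Ψ₁(1⊗c⊗1) = t₀(c⊗1)`. -/
def psi1 (bb : Module.Basis (Fin 8) k (A k)) (c : A k) : PP k := t0 bb (c ⊗ₜ 1)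
/-- `Ψ₂(1⊗b⊗c⊗1) = t₁(b·Ψ₁(1⊗c⊗1))`. -/
def psi2 (bb : Module.Basis (Fin 8) k (A k)) (b c : A k) : PP k := t1 bb (lmp k b (psi1 bb c))
/-- `Ψ₃(1⊗a⊗b⊗c⊗1) = t₂(a·Ψ₂(1⊗b⊗c⊗1))`. -/
def psi3 (bb : Module.Basis (Fin 8) k (A k)) (a b c : A k) : AA k :=
  t2 bb (lmp k a (psi2 bb b c))
/-- `Ψ₄(1⊗a₀⊗a⊗b⊗c⊗1) = t₃(a₀·Ψ₃(1⊗a⊗b⊗c⊗1))`. -/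
def psi4 (bb : Module.Basis (Fin 8) k (A k)) (a0 a b c : A k) : AA k :=
  t3 bb (lm k a0 (psi3 bb a b c))

/-- The symmetrizing bilinear form: `⟨a,b⟩` is the coefficient of `xyxy` in
`a*b`; on basis monomials it is `1` iff `b₁b₂ = xyxy` and `0` otherwise. -/
def bform (bb : Module.Basis (Fin 8) k (A k)) (a b : A k) : k := bb.repr (a * b) 7

end QP

open QP

/-!
In characteristic 2 the defining relations read `x² = yxy` and `y² = xyx`, so
`x³ = xyxy = yxyx = y³` spans the socle, and `x⁴ = y⁴ = 0` kills it under multiplication by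
`x` or `y`. Each of `x²y`, `yx²`, `y²x`, `xy²` satisfies `u = a u b` for a nilpotent
generator `a` (e.g. `x²y = yx·y² = y·x²y·x`), hence vanishes. So the only words in `x, y` of
length at least four that survive are `xyxy = yxyx`, and the coefficient of `xyxy` in
`α(C(b))` can be read off monomial by monomial.
-/

theorem eq_zero_of_eq_mul_mul_of_isNilpotent {R : Type*} [Semiring R] {a b u : R}
    (ha : IsNilpotent a) (h : u = a * u * b) : u = 0 := by
  obtain ⟨n, hn⟩ := ha
  have hpow : ∀ m : ℕ, u = a ^ m * u * b ^ m := by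
    intro m
    induction m with
    | zero => simp
    | succ m ih =>
      calc u = a ^ m * (a * u * b) * b ^ m := by rw [← h, ← ih]
        _ = a ^ (m + 1) * u * b ^ (m + 1) := by
          rw [pow_succ a, pow_succ' b]; simp only [mul_assoc]
  rw [hpow n, hn, zero_mul, zero_mul]

namespace QP

section Relations

variable {k : Type*} [Field k]

theorem x_pow_four : x k ^ 4 = 0 := by
  simpa [x, map_pow] using RingQuot.mkAlgHom_rel k (QRel.x4 (k := k))

theorem y_pow_four : y k ^ 4 = 0 := by
  simpa [y, map_pow] using RingQuot.mkAlgHom_rel k (QRel.y4 (k := k))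

theorem eq_of_add_eq_zero [CharP k 2] {a b : A k} (h : a + b = 0) : a = b := by
  have two_eq_zero : (2 : A k) = 0 := by
    rw [← map_ofNat (algebraMap k (A k)) 2, CharTwo.two_eq_zero (R := k), map_zero]
  rw [eq_neg_of_add_eq_zero_left h, neg_eq_iff_add_eq_zero, ← two_mul, two_eq_zero, zero_mul]

variable [CharP k 2]

theorem x_mul_x : x k * x k = y k * x k * y k :=
  eq_of_add_eq_zero <| by simpa [x, y] using RingQuot.mkAlgHom_rel k (QRel.rx (k := k))

theorem y_mul_y : y k * y k = x k * y k * x k :=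
  eq_of_add_eq_zero <| by simpa [x, y] using RingQuot.mkAlgHom_rel k (QRel.ry (k := k))

theorem y_mul_x_mul_y_mul_x : y k * (x k * (y k * x k)) = x k * (y k * (x k * y k)) := by
  calc y k * (x k * (y k * x k)) = y k * (y k * y k) := by rw [y_mul_y, mul_assoc]
    _ = x k * (y k * (x k * y k)) := by rw [← mul_assoc, y_mul_y]; noncomm_ring

theorem y_mul_x_mul_y_mul_x_mul_y : y k * (x k * (y k * (x k * y k))) = 0 := by
  calc y k * (x k * (y k * (x k * y k))) = y k * (x k * y k * x k) * y k := by noncomm_ring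
    _ = y k ^ 4 := by rw [← y_mul_y]; noncomm_ring
    _ = 0 := y_pow_four

theorem x_mul_x_mul_y : x k * (x k * y k) = 0 :=
  eq_zero_of_eq_mul_mul_of_isNilpotent ⟨4, y_pow_four⟩ <| by
    calc x k * (x k * y k) = y k * x k * (y k * y k) := by rw [← mul_assoc, x_mul_x]; noncomm_ring
      _ = y k * (x k * (x k * y k)) * x k := by rw [y_mul_y]; noncomm_ring

theorem y_mul_x_mul_x : y k * (x k * x k) = 0 :=
  eq_zero_of_eq_mul_mul_of_isNilpotent ⟨4, x_pow_four⟩ <| by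
    calc y k * (x k * x k) = y k * y k * (x k * y k) := by rw [x_mul_x]; noncomm_ring
      _ = x k * (y k * (x k * x k)) * y k := by rw [y_mul_y]; noncomm_ring

theorem y_mul_y_mul_x : y k * (y k * x k) = 0 :=
  eq_zero_of_eq_mul_mul_of_isNilpotent ⟨4, x_pow_four⟩ <| by
    calc y k * (y k * x k) = x k * y k * (x k * x k) := by rw [← mul_assoc, y_mul_y]; noncomm_ring
      _ = x k * (y k * (y k * x k)) * y k := by rw [x_mul_x]; noncomm_ring

theorem x_mul_y_mul_y : x k * (y k * y k) = 0 :=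
  eq_zero_of_eq_mul_mul_of_isNilpotent ⟨4, y_pow_four⟩ <| by
    calc x k * (y k * y k) = x k * x k * (y k * x k) := by rw [y_mul_y]; noncomm_ring
      _ = y k * (x k * (y k * y k)) * x k := by rw [x_mul_x]; noncomm_ring

theorem x_mul_x_mul_y_mul (t : A k) : x k * (x k * (y k * t)) = 0 := by
  simpa only [mul_assoc, zero_mul] using congrArg (· * t) (x_mul_x_mul_y (k := k))

theorem y_mul_y_mul_x_mul (t : A k) : y k * (y k * (x k * t)) = 0 := by
  simpa only [mul_assoc, zero_mul] using congrArg (· * t) (y_mul_y_mul_x (k := k))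

end Relations

section Form

variable {k : Type*} [Field k]

theorem sum_erase_bform_pairc_Cm (bb : Module.Basis (Fin 8) k (A k)) (c₁ c₂ : A k) :
    ∑ i ∈ Finset.univ.erase (0 : Fin 8), bform bb (pairc k c₁ c₂ (Cm k i)) 1 • dm k i =
      bform bb c₁ 1 • (y k * x k * y k) + bform bb c₂ 1 • (x k * y k * x k)
      + bform bb (c₁ * y k + x k * c₂) 1 • (x k * y k)
      + bform bb (y k * c₁ + c₂ * x k) 1 • (y k * x k)
      + bform bb (c₁ * (y k * x k) + x k * y k * c₁ + x k * c₂ * x k) 1 • y k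
      + bform bb (y k * c₁ * y k + c₂ * (x k * y k) + y k * x k * c₂) 1 • x k
      + bform bb (c₁ * (y k * x k * y k) + x k * y k * c₁ * y k + x k * c₂ * (x k * y k)
          + x k * y k * x k * c₂) 1 • 1 := by
  rw [Finset.sum_erase_eq_sub (Finset.mem_univ 0), Fin.sum_univ_eight]
  simp [Cm, dm, mon, pairc, bimap, mulm, two, add_assoc]

variable {bb : Module.Basis (Fin 8) k (A k)}

theorem bform_zero_left (c : A k) : bform bb 0 c = 0 := by
  simp [bform]

theorem bform_mon_one (hbb : ∀ i, bb i = mon k i) (j : Fin 8) :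
    bform bb (mon k j) 1 = if j = 7 then 1 else 0 := by
  rw [bform, mul_one, ← hbb, Module.Basis.repr_self_apply]

theorem bform_x_mul_y_mul_x_one (hbb : ∀ i, bb i = mon k i) :
    bform bb (x k * (y k * x k)) 1 = 0 := by
  simpa [mon, mul_assoc] using bform_mon_one hbb 5

theorem bform_y_mul_x_mul_y_one (hbb : ∀ i, bb i = mon k i) :
    bform bb (y k * (x k * y k)) 1 = 0 := by
  simpa [mon, mul_assoc] using bform_mon_one hbb 6

theorem bform_x_mul_y_mul_x_mul_y_one (hbb : ∀ i, bb i = mon k i) :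
    bform bb (x k * (y k * (x k * y k))) 1 = 1 := by
  simpa [mon, mul_assoc] using bform_mon_one hbb 7

end Form

end QP

open QP

theorem stmt_14_general (k : Type) [Field k] [CharP k 2]
    (bb : Module.Basis (Fin 8) k (A k)) (hbb : ∀ i, bb i = mon k i) :
    -- Δ((xyxy, xyx)) = yxy
    (∑ i ∈ Finset.univ.erase (0 : Fin 8),
      bform bb (pairc k (mon k 7) (mon k 5) (Cm k i)) 1 • dm k i)
      = y k * x k * y k ∧
    -- Δ((xyxy, 0)) = yxy
    (∑ i ∈ Finset.univ.erase (0 : Fin 8),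
      bform bb (pairc k (mon k 7) 0 (Cm k i)) 1 • dm k i)
      = y k * x k * y k ∧
    -- Δ((xyx, 0)) = xy + yx
    (∑ i ∈ Finset.univ.erase (0 : Fin 8),
      bform bb (pairc k (mon k 5) 0 (Cm k i)) 1 • dm k i)
      = x k * y k + y k * x k ∧
    -- Δ((yxy, xyxy)) = xyx
    (∑ i ∈ Finset.univ.erase (0 : Fin 8),
      bform bb (pairc k (mon k 6) (mon k 7) (Cm k i)) 1 • dm k i)
      = x k * y k * x k ∧
    -- Δ((0, xyxy)) = xyx
    (∑ i ∈ Finset.univ.erase (0 : Fin 8),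
      bform bb (pairc k 0 (mon k 7) (Cm k i)) 1 • dm k i)
      = x k * y k * x k := by
  simp only [sum_erase_bform_pairc_Cm]
  refine ⟨?_, ?_, ?_, ?_, ?_⟩ <;>
  · simp [mon, mul_assoc, bform_zero_left, bform_x_mul_y_mul_x_one hbb,
      bform_y_mul_x_mul_y_one hbb, bform_x_mul_y_mul_x_mul_y_one hbb, y_mul_x_mul_y_mul_x,
      y_mul_x_mul_y_mul_x_mul_y, x_mul_x_mul_y, x_mul_x_mul_y_mul, y_mul_y_mul_x, y_mul_y_mul_x_mul,
      y_mul_x_mul_x, x_mul_y_mul_y]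

/-- For a bimodule map `α = (a₁,a₂) ∈ Hom_{A^e}(P₁,A)` (values on `1⊗x⊗1`,
`1⊗y⊗1`), with `Δ(α) = Σ_{b∈B∖{1}} ⟨α(C(b)), 1⟩·b*`:
`Δ((xyxy,xyx)) = Δ((xyxy,0)) = yxy`, `Δ((xyx,0)) = xy+yx`,
`Δ((yxy,xyxy)) = Δ((0,xyxy)) = xyx`; these cocycles represent
`p₁u₁ = p₂u₁'`, `p₃u₁`, `p₂u₁ = p₂'u₁'`, `p₂'u₁ = p₁u₁'`, `p₃u₁'`, so
`Δ(p₁u₁) = Δ(p₃u₁) = Δ(p₂u₁') = p₂'`, `Δ(p₂u₁) = Δ(p₂'u₁') = p₁`,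
`Δ(p₂'u₁) = Δ(p₁u₁') = Δ(p₃u₁') = p₂`. -/
theorem stmt_14 (k : Type) [Field k] [IsAlgClosed k] [CharP k 2]
    (bb : Module.Basis (Fin 8) k (A k)) (hbb : ∀ i, bb i = mon k i) :
    -- Δ((xyxy, xyx)) = yxy
    (∑ i ∈ Finset.univ.erase (0 : Fin 8),
      bform bb (pairc k (mon k 7) (mon k 5) (Cm k i)) 1 • dm k i)
      = y k * x k * y k ∧
    -- Δ((xyxy, 0)) = yxy
    (∑ i ∈ Finset.univ.erase (0 : Fin 8),
      bform bb (pairc k (mon k 7) 0 (Cm k i)) 1 • dm k i)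
      = y k * x k * y k ∧
    -- Δ((xyx, 0)) = xy + yx
    (∑ i ∈ Finset.univ.erase (0 : Fin 8),
      bform bb (pairc k (mon k 5) 0 (Cm k i)) 1 • dm k i)
      = x k * y k + y k * x k ∧
    -- Δ((yxy, xyxy)) = xyx
    (∑ i ∈ Finset.univ.erase (0 : Fin 8),
      bform bb (pairc k (mon k 6) (mon k 7) (Cm k i)) 1 • dm k i)
      = x k * y k * x k ∧
    -- Δ((0, xyxy)) = xyx
    (∑ i ∈ Finset.univ.erase (0 : Fin 8),
      bform bb (pairc k 0 (mon k 7) (Cm k i)) 1 • dm k i)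
      = x k * y k * x k :=
  stmt_14_general k bb hbb
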